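/- arXiv:1307.0092 — 2 statements merged into one kernel-verified Lean document; each statement's English description precedes it below -/
import Mathlib

section
/- A recursively labelled red and white tree T ∈ BWTS(n) belongs to the closure of the three generators T_≺, T_≻, T_∘ (together with the unit single-node tree labelled {1}) under the compositions ∘_x if and only if no node of T has an empty label set. -/
open scoped Classical

/- A labelled red and white tree on `{1,…,n}` is encoded by the (laminar) family of the
sets `S(z)` of all labels carried by the subtree rooted at each node `z`; this determines
the tree completely (children of a node are the maximal proper members of the family
below it, its own labels are those not appearing in its children, and the condition that
an unlabelled node has at least two children is automatic). -/

/-- The children of the node `S` in the family `fam`: maximal members strictly below `S`. -/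
def childrenF (fam : Finset (Finset ℕ)) (S : Finset ℕ) : Finset (Finset ℕ) :=
  fam.filter fun T => T ⊂ S ∧ ∀ U ∈ fam, T ⊂ U → ¬ U ⊂ S

/-- The set of labels carried by the node `S` itself. -/
def labelsOf (fam : Finset (Finset ℕ)) (S : Finset ℕ) : Finset ℕ :=
  S \ (childrenF fam S).biUnion id

/-- `fam` encodes a labelled red and white tree on `{1,…,n}` (`fam ∈ BWTSL(n)`). -/
def IsRWTree (n : ℕ) (fam : Finset (Finset ℕ)) : Prop :=
  (∀ S ∈ fam, S.Nonempty ∧ S ⊆ Finset.Icc 1 n) ∧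
  Finset.Icc 1 n ∈ fam ∧
  ∀ S ∈ fam, ∀ T ∈ fam, S ⊆ T ∨ T ⊆ S ∨ Disjoint S T

/-- The tree is recursively labelled: the total label set of every subtree is an
interval of consecutive integers. -/
def IsRecursive (fam : Finset (Finset ℕ)) : Prop :=
  ∀ S ∈ fam, ∃ a b : ℕ, S = Finset.Icc a b

/-- The node `S` is red: it carries no label and all of its children are white. -/
def IsRed (fam : Finset (Finset ℕ)) (S : Finset ℕ) : Prop :=
  labelsOf fam S = ∅ ∧ ∀ T ∈ childrenF fam S, ¬ IsRed fam T
termination_by S.card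
decreasing_by
  rename_i hT
  exact Finset.card_lt_card (Finset.mem_filter.mp hT).2.1

/-- Relabelling of the first tree in `T₁ ∘ₓ T₂` (`n` the arity of `T₂`): labels `j > x`
are shifted by `n - 1` and the label `x` becomes the whole block `{x,…,x+n-1}`. -/
def relabL (x n : ℕ) (T : Finset ℕ) : Finset ℕ :=
  T.biUnion fun j =>
    if j < x then {j} else if j = x then Finset.Icc x (x + n - 1) else {j + n - 1}

/-- Relabelling of the second tree in `T₁ ∘ₓ T₂`: labels are shifted by `x - 1`. -/
def relabR (x : ℕ) (T : Finset ℕ) : Finset ℕ := T.image fun j => x + j - 1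

/-- The composition `T₁ ∘ₓ T₂` of labelled red and white trees (in the laminar-family
encoding), `n` being the arity of `T₂`.  The four cases correspond to the rules
(R1), (R3), (R2) and (W) respectively:  if the root of `T₂` is red then the result is
`T₂` when `T₁` is the single node labelled `x` (R1); the node `z` of `T₁` containing `x`
is deleted and the children of the root of `T₂` are attached to its parent when `z` is a
leaf whose only label is `x` (R3); otherwise the root of `T₂` becomes a new child of `z`
(R2).  If the root of `T₂` is not red, it is merged with `z` (W). -/
noncomputable def rwCompose (n x : ℕ) (fam₁ fam₂ : Finset (Finset ℕ)) :
    Finset (Finset ℕ) :=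
  let B : Finset ℕ := Finset.Icc x (x + n - 1)
  let f₁ := fam₁.image (relabL x n)
  let f₂ := fam₂.image (relabR x)
  if IsRed fam₂ (Finset.Icc 1 n) then
    if fam₁ = {{x}} then f₂
    else if {x} ∈ fam₁ then (f₁ \ {B}) ∪ (f₂ \ {B})
    else f₁ ∪ f₂
  else f₁ ∪ (f₂ \ {B})

/-- The unit: the single node labelled `{1}`. -/
def unitT : Finset (Finset ℕ) := {{1}}
/-- `T_≺`: white root labelled `{1}` with a single white child labelled `{2}`. -/
def Tprec : Finset (Finset ℕ) := {{1, 2}, {2}}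
/-- `T_≻`: white root labelled `{2}` with a single white child labelled `{1}`. -/
def Tsucc : Finset (Finset ℕ) := {{1, 2}, {1}}
/-- `T_∘`: a single white node labelled `{1,2}`. -/
def Tmid : Finset (Finset ℕ) := {{1, 2}}
/-- `T_⊙`: red empty root with two white children labelled `{1}` and `{2}`. -/
def Tdot : Finset (Finset ℕ) := {{1, 2}, {1}, {2}}

/-- The closure of a family of generators under the compositions `∘ₓ`. -/
inductive RWClosure (G : ℕ → Finset (Finset ℕ) → Prop) : ℕ → Finset (Finset ℕ) → Prop
  | gen {n : ℕ} {fam : Finset (Finset ℕ)} : G n fam → RWClosure G n fam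
  | comp {m n x : ℕ} {fam₁ fam₂ : Finset (Finset ℕ)} :
      RWClosure G m fam₁ → RWClosure G n fam₂ → 1 ≤ x → x ≤ m →
      RWClosure G (m + n - 1) (rwCompose n x fam₁ fam₂)

/-- The unit together with the three generators `T_≺, T_≻, T_∘`. -/
def Gen3T (n : ℕ) (fam : Finset (Finset ℕ)) : Prop :=
  (n = 1 ∧ fam = unitT) ∨ (n = 2 ∧ (fam = Tprec ∨ fam = Tsucc ∨ fam = Tmid))

def Lab (fam : Finset (Finset ℕ)) (S : Finset ℕ) : Prop :=
  ∃ ℓ ∈ S, ∀ U ∈ fam, ℓ ∈ U → ¬ U ⊂ S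

lemma Lab.nonempty {fam : Finset (Finset ℕ)} {S : Finset ℕ} (h : Lab fam S) :
    (labelsOf fam S).Nonempty := by
  obtain ⟨ℓ, hℓS, hℓ⟩ := h
  refine ⟨ℓ, Finset.mem_sdiff.2 ⟨hℓS, fun hc => ?_⟩⟩
  obtain ⟨T, hT, hℓT⟩ := Finset.mem_biUnion.1 hc
  have hT' := Finset.mem_filter.1 hT
  exact hℓ T hT'.1 hℓT hT'.2.1

lemma lab_of_nonempty {fam : Finset (Finset ℕ)} {S : Finset ℕ}
    (h : (labelsOf fam S).Nonempty) : Lab fam S := by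
  obtain ⟨ℓ, hℓ⟩ := h
  have hmem := Finset.mem_sdiff.1 hℓ
  refine ⟨ℓ, hmem.1, fun U hU hℓU hUS => ?_⟩
  -- pick a maximal member containing ℓ below S
  classical
  set s := fam.filter (fun V => ℓ ∈ V ∧ V ⊂ S) with hs
  have hUs : U ∈ s := Finset.mem_filter.2 ⟨hU, hℓU, hUS⟩
  obtain ⟨T, hTs, hTmax⟩ := s.exists_max_image Finset.card ⟨U, hUs⟩
  have hT := Finset.mem_filter.1 hTs
  apply hmem.2
  refine Finset.mem_biUnion.2 ⟨T, Finset.mem_filter.2 ⟨hT.1, hT.2.2, ?_⟩, hT.2.1⟩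
  intro V hV hTV hVS
  have hVs : V ∈ s := Finset.mem_filter.2 ⟨hV, hTV.1 hT.2.1, hVS⟩
  have := hTmax V hVs
  exact absurd (Finset.card_lt_card hTV) (not_lt.2 this)

lemma not_isRed_of_lab {fam : Finset (Finset ℕ)} {S : Finset ℕ} (h : Lab fam S) :
    ¬ IsRed fam S := by
  intro hred
  rw [IsRed] at hred
  obtain ⟨ℓ, hℓ⟩ := h.nonempty
  rw [hred.1] at hℓ
  exact absurd hℓ (Finset.notMem_empty ℓ)

lemma mem_relabL {x n : ℕ} (hn : 1 ≤ n) {S : Finset ℕ} {k : ℕ} :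
    k ∈ relabL x n S ↔
      (k < x ∧ k ∈ S) ∨ (x ≤ k ∧ k ≤ x + n - 1 ∧ x ∈ S) ∨
      (x + n - 1 < k ∧ k - (n - 1) ∈ S) := by
  unfold relabL
  rw [Finset.mem_biUnion]
  constructor
  · rintro ⟨j, hj, hk⟩
    split_ifs at hk with h1 h2
    · rw [Finset.mem_singleton] at hk; subst hk; exact Or.inl ⟨h1, hj⟩
    · subst h2; rw [Finset.mem_Icc] at hk
      exact Or.inr (Or.inl ⟨hk.1, hk.2, hj⟩)
    · rw [Finset.mem_singleton] at hk
      have hq : x < j := by omega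
      refine Or.inr (Or.inr ⟨by omega, ?_⟩)
      have : k - (n - 1) = j := by omega
      rwa [this]
  · rintro (⟨h1, h2⟩ | ⟨h1, h2, h3⟩ | ⟨h1, h2⟩)
    · exact ⟨k, h2, by simp [h1]⟩
    · refine ⟨x, h3, ?_⟩
      rw [if_neg (lt_irrefl x), if_pos rfl, Finset.mem_Icc]
      exact ⟨h1, h2⟩
    · refine ⟨k - (n - 1), h2, ?_⟩
      rw [if_neg (by omega), if_neg (by omega), Finset.mem_singleton]
      omega

lemma relabL_mono {x n : ℕ} {S T : Finset ℕ} (h : S ⊆ T) :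
    relabL x n S ⊆ relabL x n T :=
  Finset.biUnion_subset_biUnion_of_subset_left _ h

lemma relabL_reflect {x n : ℕ} (hn : 1 ≤ n) {S T : Finset ℕ}
    (h : relabL x n S ⊆ relabL x n T) : S ⊆ T := by
  intro j hj
  rcases lt_trichotomy j x with hc | hc | hc
  · have : j ∈ relabL x n S := (mem_relabL hn).2 (Or.inl ⟨hc, hj⟩)
    rcases (mem_relabL hn).1 (h this) with ⟨_, h2⟩ | ⟨h1, _, _⟩ | ⟨h1, _⟩ <;>
      first | exact h2 | omega
  · subst hc
    have : j ∈ relabL j n S := (mem_relabL hn).2 (Or.inr (Or.inl ⟨le_refl _, by omega, hj⟩))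
    rcases (mem_relabL hn).1 (h this) with ⟨h1, _⟩ | ⟨_, _, h3⟩ | ⟨h1, _⟩ <;>
      first | exact h3 | omega
  · have : j + n - 1 ∈ relabL x n S := (mem_relabL hn).2 (Or.inr (Or.inr ⟨by omega, by
      have : j + n - 1 - (n - 1) = j := by omega
      rwa [this]⟩))
    rcases (mem_relabL hn).1 (h this) with ⟨h1, _⟩ | ⟨_, h2, _⟩ | ⟨h1, h2⟩
    · omega
    · omega
    · have : j + n - 1 - (n - 1) = j := by omega
      rwa [this] at h2

lemma relabL_reflect_iff {x n : ℕ} (hn : 1 ≤ n) {S T : Finset ℕ} :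
    relabL x n S ⊆ relabL x n T ↔ S ⊆ T :=
  ⟨relabL_reflect hn, relabL_mono⟩

lemma relabL_inj {x n : ℕ} (hn : 1 ≤ n) {S T : Finset ℕ}
    (h : relabL x n S = relabL x n T) : S = T :=
  le_antisymm (relabL_reflect hn h.le) (relabL_reflect hn h.ge)

lemma mem_relabR {x : ℕ} {T : Finset ℕ} {k : ℕ} :
    k ∈ relabR x T ↔ ∃ j ∈ T, x + j - 1 = k := Finset.mem_image

lemma relabR_subset_B {x n : ℕ} {T : Finset ℕ} (hT : T ⊆ Finset.Icc 1 n) :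
    relabR x T ⊆ Finset.Icc x (x + n - 1) := by
  intro k hk
  obtain ⟨j, hj, hk⟩ := mem_relabR.1 hk
  have := Finset.mem_Icc.1 (hT hj)
  rw [Finset.mem_Icc]; omega

lemma relabR_reflect {x n : ℕ} (hx : 1 ≤ x) {S T : Finset ℕ}
    (hS : S ⊆ Finset.Icc 1 n) (hT : T ⊆ Finset.Icc 1 n)
    (h : relabR x S ⊆ relabR x T) : S ⊆ T := by
  intro j hj
  have : x + j - 1 ∈ relabR x T := h (mem_relabR.2 ⟨j, hj, rfl⟩)
  obtain ⟨j', hj', he⟩ := mem_relabR.1 this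
  have h1 := Finset.mem_Icc.1 (hS hj)
  have h2 := Finset.mem_Icc.1 (hT hj')
  have : j' = j := by omega
  rwa [this] at hj'

lemma relabR_Icc {x n : ℕ} (hx : 1 ≤ x) (hn : 1 ≤ n) :
    relabR x (Finset.Icc 1 n) = Finset.Icc x (x + n - 1) := by
  ext k
  rw [mem_relabR, Finset.mem_Icc]
  constructor
  · rintro ⟨j, hj, he⟩; have := Finset.mem_Icc.1 hj; omega
  · intro hk; exact ⟨k - x + 1, Finset.mem_Icc.2 (by omega), by omega⟩

lemma relabL_Icc_root {x n m : ℕ} (hn : 1 ≤ n) (hx1 : 1 ≤ x) (hxm : x ≤ m) :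
    relabL x n (Finset.Icc 1 m) = Finset.Icc 1 (m + n - 1) := by
  ext k
  rw [mem_relabL hn]
  simp only [Finset.mem_Icc]
  omega

def InvT (n : ℕ) (fam : Finset (Finset ℕ)) : Prop :=
  (∀ S ∈ fam, S ⊆ Finset.Icc 1 n) ∧ Finset.Icc 1 n ∈ fam ∧ ∀ S ∈ fam, Lab fam S

lemma InvT.one_le {n : ℕ} {fam : Finset (Finset ℕ)} (h : InvT n fam) : 1 ≤ n := by
  obtain ⟨ℓ, hℓ, -⟩ := h.2.2 _ h.2.1
  have := Finset.mem_Icc.1 hℓ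
  omega

lemma rwCompose_eq {n x : ℕ} {f₁ f₂ : Finset (Finset ℕ)}
    (hred : ¬ IsRed f₂ (Finset.Icc 1 n)) :
    rwCompose n x f₁ f₂ =
      f₁.image (relabL x n) ∪
        (f₂.image (relabR x) \ {Finset.Icc x (x + n - 1)}) := by
  simp only [rwCompose]
  rw [if_neg hred]

lemma mem_rwCompose {n x : ℕ} {f₁ f₂ : Finset (Finset ℕ)}
    (hred : ¬ IsRed f₂ (Finset.Icc 1 n)) {V : Finset ℕ} :
    V ∈ rwCompose n x f₁ f₂ ↔
      (∃ S₁ ∈ f₁, relabL x n S₁ = V) ∨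
      (∃ T ∈ f₂, relabR x T = V ∧ V ≠ Finset.Icc x (x + n - 1)) := by
  rw [rwCompose_eq hred]
  simp only [Finset.mem_union, Finset.mem_sdiff, Finset.mem_image,
    Finset.mem_singleton]
  constructor
  · rintro (⟨S₁, hS₁, rfl⟩ | ⟨⟨T, hT, rfl⟩, hne⟩)
    · exact Or.inl ⟨S₁, hS₁, rfl⟩
    · exact Or.inr ⟨T, hT, rfl, hne⟩
  · rintro (⟨S₁, hS₁, rfl⟩ | ⟨T, hT, rfl, hne⟩)
    · exact Or.inl ⟨S₁, hS₁, rfl⟩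
    · exact Or.inr ⟨⟨T, hT, rfl⟩, hne⟩

lemma comp_inv {m n x : ℕ} {f₁ f₂ : Finset (Finset ℕ)} (h₁ : InvT m f₁) (h₂ : InvT n f₂)
    (hx1 : 1 ≤ x) (hxm : x ≤ m) : InvT (m + n - 1) (rwCompose n x f₁ f₂) := by
  have hn : 1 ≤ n := h₂.one_le
  have hm : 1 ≤ m := h₁.one_le
  have hred : ¬ IsRed f₂ (Finset.Icc 1 n) := not_isRed_of_lab (h₂.2.2 _ h₂.2.1)
  have hmem : ∀ V, V ∈ rwCompose n x f₁ f₂ ↔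
      (∃ S₁ ∈ f₁, relabL x n S₁ = V) ∨
      (∃ T ∈ f₂, relabR x T = V ∧ V ≠ Finset.Icc x (x + n - 1)) :=
    fun V => mem_rwCompose hred
  refine ⟨?_, ?_, ?_⟩
  · -- subsets
    intro V hV
    rcases (hmem V).1 hV with ⟨S₁, hS₁, rfl⟩ | ⟨T, hT, rfl, -⟩
    · intro k hk
      have hS := h₁.1 S₁ hS₁
      rw [Finset.mem_Icc]
      rcases (mem_relabL hn).1 hk with ⟨h1, h2⟩ | ⟨h1, h2, h3⟩ | ⟨h1, h2⟩
      · have := Finset.mem_Icc.1 (hS h2); omega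
      · omega
      · have := Finset.mem_Icc.1 (hS h2); omega
    · refine (relabR_subset_B (h₂.1 T hT)).trans ?_
      apply Finset.Icc_subset_Icc <;> omega
  · -- root
    rw [hmem]
    exact Or.inl ⟨Finset.Icc 1 m, h₁.2.1, relabL_Icc_root hn hx1 hxm⟩
  · -- Lab for all members
    intro V hV
    rcases (hmem V).1 hV with ⟨S₁, hS₁, rfl⟩ | ⟨T, hT, rfl, hVB⟩
    · -- V = relabL S₁
      obtain ⟨ℓ, hℓS, hℓ⟩ := h₁.2.2 S₁ hS₁
      by_cases hℓx : ℓ = x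
      · -- witness from the root of f₂
        rw [hℓx] at hℓS hℓ
        obtain ⟨ℓ₂, hℓ₂S, hℓ₂⟩ := h₂.2.2 _ h₂.2.1
        have hℓ₂n := Finset.mem_Icc.1 hℓ₂S
        refine ⟨x + ℓ₂ - 1, (mem_relabL hn).2 (Or.inr (Or.inl ⟨by omega, by omega, hℓS⟩)),
          fun U hU hkU hUV => ?_⟩
        rcases (hmem U).1 hU with ⟨S', hS', rfl⟩ | ⟨T', hT', rfl, hUB⟩
        · have hxS' : x ∈ S' := by
            rcases (mem_relabL hn).1 hkU with ⟨h1, h2⟩ | ⟨h1, h2, h3⟩ | ⟨h1, h2⟩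
            · omega
            · exact h3
            · omega
          have hssub : S' ⊂ S₁ := by
            rw [Finset.ssubset_iff_subset_ne] at hUV ⊢
            exact ⟨relabL_reflect hn hUV.1, fun he => hUV.2 (by rw [he])⟩
          exact hℓ S' hS' hxS' hssub
        · -- T' properly below root of f₂ contains ℓ₂ : contradiction
          have hT'sub : T' ⊆ Finset.Icc 1 n := h₂.1 T' hT'
          have hT'ne : T' ≠ Finset.Icc 1 n := by
            intro he; subst he
            exact hUB (relabR_Icc hx1 hn)
          obtain ⟨j, hjT', hje⟩ := mem_relabR.1 hkU
          have hj := Finset.mem_Icc.1 (hT'sub hjT')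
          have : j = ℓ₂ := by omega
          subst this
          exact hℓ₂ T' hT' hjT' (Finset.ssubset_iff_subset_ne.2 ⟨hT'sub, hT'ne⟩)
      · -- witness the shifted ℓ
        have hℓm := Finset.mem_Icc.1 (h₁.1 S₁ hS₁ hℓS)
        refine ⟨if ℓ < x then ℓ else ℓ + n - 1, ?_, fun U hU hkU hUV => ?_⟩
        · rcases lt_or_gt_of_ne hℓx with hc | hc
          · rw [if_pos hc]; exact (mem_relabL hn).2 (Or.inl ⟨hc, hℓS⟩)
          · rw [if_neg (by omega)]
            refine (mem_relabL hn).2 (Or.inr (Or.inr ⟨by omega, ?_⟩))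
            have : ℓ + n - 1 - (n - 1) = ℓ := by omega
            rwa [this]
        · rcases (hmem U).1 hU with ⟨S', hS', rfl⟩ | ⟨T', hT', rfl, hUB⟩
          · have hℓS' : ℓ ∈ S' := by
              rcases lt_or_gt_of_ne hℓx with hc | hc
              · rw [if_pos hc] at hkU
                rcases (mem_relabL hn).1 hkU with ⟨h1, h2⟩ | ⟨h1, h2, h3⟩ | ⟨h1, h2⟩
                · exact h2
                · omega
                · omega
              · rw [if_neg (by omega)] at hkU
                rcases (mem_relabL hn).1 hkU with ⟨h1, h2⟩ | ⟨h1, h2, h3⟩ | ⟨h1, h2⟩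
                · omega
                · omega
                · have : ℓ + n - 1 - (n - 1) = ℓ := by omega
                  rwa [this] at h2
            have hssub : S' ⊂ S₁ := by
              rw [Finset.ssubset_iff_subset_ne] at hUV ⊢
              exact ⟨relabL_reflect hn hUV.1, fun he => hUV.2 (by rw [he])⟩
            exact hℓ S' hS' hℓS' hssub
          · -- shifted ℓ is outside the block B
            have hsub := relabR_subset_B (x := x) (h₂.1 T' hT')
            have := Finset.mem_Icc.1 (hsub hkU)
            rcases lt_or_gt_of_ne hℓx with hc | hc
            · rw [if_pos hc] at this; omega
            · rw [if_neg (by omega)] at this; omega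
    · -- V = relabR T
      obtain ⟨ℓ, hℓT, hℓ⟩ := h₂.2.2 T hT
      have hℓn := Finset.mem_Icc.1 (h₂.1 T hT hℓT)
      refine ⟨x + ℓ - 1, mem_relabR.2 ⟨ℓ, hℓT, rfl⟩, fun U hU hkU hUV => ?_⟩
      rcases (hmem U).1 hU with ⟨S', hS', rfl⟩ | ⟨T', hT', rfl, hUB⟩
      · -- then B ⊆ U, impossible since U ⊂ V ⊆ B
        have hxS' : x ∈ S' := by
          rcases (mem_relabL hn).1 hkU with ⟨h1, h2⟩ | ⟨h1, h2, h3⟩ | ⟨h1, h2⟩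
          · omega
          · exact h3
          · omega
        have hBsub : Finset.Icc x (x + n - 1) ⊆ relabL x n S' := by
          intro k hk
          have := Finset.mem_Icc.1 hk
          exact (mem_relabL hn).2 (Or.inr (Or.inl ⟨this.1, this.2, hxS'⟩))
        have hVB' : relabR x T ⊆ relabL x n S' :=
          (relabR_subset_B (h₂.1 T hT)).trans hBsub
        exact (Finset.ssubset_iff_subset_ne.1 (hUV.trans_subset hVB')).2 rfl
      · have hT'T : T' ⊂ T := by
          rw [Finset.ssubset_iff_subset_ne] at hUV ⊢
          refine ⟨relabR_reflect hx1 (h₂.1 T' hT') (h₂.1 T hT) hUV.1,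
            fun he => hUV.2 (by rw [he])⟩
        obtain ⟨j, hjT', hje⟩ := mem_relabR.1 hkU
        have hj := Finset.mem_Icc.1 (h₂.1 T' hT' hjT')
        have : j = ℓ := by omega
        subst this
        exact hℓ T' hT' hjT' hT'T

lemma Icc12 : Finset.Icc 1 2 = ({1, 2} : Finset ℕ) := by
  ext k; simp [Finset.mem_Icc, Finset.mem_insert]; omega

lemma not_ssubset_self {S : Finset ℕ} : ¬ S ⊂ S :=
  fun hsub => (Finset.ssubset_iff_subset_ne.1 hsub).2 rfl

lemma lab_singleton_mem {fam : Finset (Finset ℕ)} {i : ℕ} : Lab fam {i} := by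
  refine ⟨i, Finset.mem_singleton_self i, fun U hU hiU hsub => ?_⟩
  have h1 := hsub.subset
  have : U = {i} := Finset.Subset.antisymm h1 (Finset.singleton_subset_iff.2 hiU)
  exact (Finset.ssubset_iff_subset_ne.1 hsub).2 this

lemma inv_unitT : InvT 1 unitT := by
  rw [InvT, Finset.Icc_self]
  refine ⟨?_, ?_, ?_⟩
  · intro S hS
    rw [unitT, Finset.mem_singleton] at hS
    subst hS; exact Finset.Subset.refl _
  · simp [unitT]
  · intro S hS
    rw [unitT, Finset.mem_singleton] at hS
    subst hS; exact lab_singleton_mem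

lemma inv_Tprec : InvT 2 Tprec := by
  rw [InvT, Icc12]
  refine ⟨?_, ?_, ?_⟩
  · intro S hS
    rw [Tprec, Finset.mem_insert, Finset.mem_singleton] at hS
    rcases hS with rfl | rfl
    · exact Finset.Subset.refl _
    · intro k hk; simp at hk ⊢; omega
  · simp [Tprec]
  · intro S hS
    rw [Tprec, Finset.mem_insert, Finset.mem_singleton] at hS
    rcases hS with rfl | rfl
    · refine ⟨1, by simp, fun U hU h1U hsub => ?_⟩
      rw [Tprec, Finset.mem_insert, Finset.mem_singleton] at hU
      rcases hU with rfl | rfl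
      · exact not_ssubset_self hsub
      · simp at h1U
    · exact lab_singleton_mem

lemma inv_Tsucc : InvT 2 Tsucc := by
  rw [InvT, Icc12]
  refine ⟨?_, ?_, ?_⟩
  · intro S hS
    rw [Tsucc, Finset.mem_insert, Finset.mem_singleton] at hS
    rcases hS with rfl | rfl
    · exact Finset.Subset.refl _
    · intro k hk; simp at hk ⊢; omega
  · simp [Tsucc]
  · intro S hS
    rw [Tsucc, Finset.mem_insert, Finset.mem_singleton] at hS
    rcases hS with rfl | rfl
    · refine ⟨2, by simp, fun U hU h1U hsub => ?_⟩
      rw [Tsucc, Finset.mem_insert, Finset.mem_singleton] at hU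
      rcases hU with rfl | rfl
      · exact not_ssubset_self hsub
      · simp at h1U
    · exact lab_singleton_mem

lemma inv_Tmid : InvT 2 Tmid := by
  rw [InvT, Icc12]
  refine ⟨?_, ?_, ?_⟩
  · intro S hS
    rw [Tmid, Finset.mem_singleton] at hS
    subst hS; exact Finset.Subset.refl _
  · simp [Tmid]
  · intro S hS
    rw [Tmid, Finset.mem_singleton] at hS
    subst hS
    refine ⟨1, by simp, fun U hU h1U hsub => ?_⟩
    rw [Tmid, Finset.mem_singleton] at hU
    subst hU; exact not_ssubset_self hsub

lemma closure_inv {n : ℕ} {fam : Finset (Finset ℕ)} (h : RWClosure Gen3T n fam) :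
    InvT n fam := by
  induction h with
  | gen hg =>
    rcases hg with ⟨rfl, rfl⟩ | ⟨rfl, (rfl | rfl | rfl)⟩
    · exact inv_unitT
    · exact inv_Tprec
    · exact inv_Tsucc
    · exact inv_Tmid
  | comp h1 h2 hx1 hxm ih1 ih2 => exact comp_inv ih1 ih2 hx1 hxm

def flatF (n : ℕ) (C : Finset ℕ) : Finset (Finset ℕ) :=
  insert (Finset.Icc 1 n) (C.image fun i => {i})

lemma mem_flatF {n : ℕ} {C : Finset ℕ} {S : Finset ℕ} :
    S ∈ flatF n C ↔ S = Finset.Icc 1 n ∨ ∃ i ∈ C, S = {i} := by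
  unfold flatF
  rw [Finset.mem_insert, Finset.mem_image]
  constructor
  · rintro (rfl | ⟨i, hi, rfl⟩)
    · exact Or.inl rfl
    · exact Or.inr ⟨i, hi, rfl⟩
  · rintro (rfl | ⟨i, hi, rfl⟩)
    · exact Or.inl rfl
    · exact Or.inr ⟨i, hi, rfl⟩

lemma flatF_good {n : ℕ} {C : Finset ℕ} (hn : 1 ≤ n)
    (hC : ∀ i ∈ C, 1 ≤ i ∧ i ≤ n) {w : ℕ} (hw1 : 1 ≤ w) (hw2 : w ≤ n) (hw : w ∉ C) :
    IsRWTree n (flatF n C) ∧ IsRecursive (flatF n C) ∧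
      ∀ S ∈ flatF n C, Lab (flatF n C) S := by
  refine ⟨⟨?_, ?_, ?_⟩, ?_, ?_⟩
  · intro S hS
    rcases mem_flatF.1 hS with rfl | ⟨i, hi, rfl⟩
    · exact ⟨⟨1, Finset.mem_Icc.2 ⟨le_refl 1, hn⟩⟩, Finset.Subset.refl _⟩
    · refine ⟨⟨i, Finset.mem_singleton_self i⟩, ?_⟩
      rw [Finset.singleton_subset_iff, Finset.mem_Icc]
      exact hC i hi
  · exact Finset.mem_insert_self _ _
  · intro S hS T hT
    rcases mem_flatF.1 hS with rfl | ⟨i, hi, rfl⟩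
    · rcases mem_flatF.1 hT with rfl | ⟨j, hj, rfl⟩
      · exact Or.inl (Finset.Subset.refl _)
      · refine Or.inr (Or.inl ?_)
        rw [Finset.singleton_subset_iff, Finset.mem_Icc]
        exact hC j hj
    · rcases mem_flatF.1 hT with rfl | ⟨j, hj, rfl⟩
      · refine Or.inl ?_
        rw [Finset.singleton_subset_iff, Finset.mem_Icc]
        exact hC i hi
      · by_cases hij : i = j
        · subst hij; exact Or.inl (Finset.Subset.refl _)
        · exact Or.inr (Or.inr (by simp [Finset.disjoint_singleton, hij, Ne.symm hij]))
  · intro S hS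
    rcases mem_flatF.1 hS with rfl | ⟨i, hi, rfl⟩
    · exact ⟨1, n, rfl⟩
    · exact ⟨i, i, by rw [Finset.Icc_self]⟩
  · intro S hS
    rcases mem_flatF.1 hS with rfl | ⟨i, hi, rfl⟩
    · refine ⟨w, Finset.mem_Icc.2 ⟨hw1, hw2⟩, fun U hU hwU hsub => ?_⟩
      rcases mem_flatF.1 hU with rfl | ⟨j, hj, rfl⟩
      · exact not_ssubset_self hsub
      · rw [Finset.mem_singleton] at hwU
        subst hwU; exact hw hj
    · exact lab_singleton_mem

lemma step_big {n : ℕ} {fam : Finset (Finset ℕ)} (hn : 2 ≤ n)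
    (h : IsRWTree n fam) (hrec : IsRecursive fam) (hlab : ∀ S ∈ fam, Lab fam S)
    {M : Finset ℕ} (hM : M ∈ fam) (hMne : M ≠ Finset.Icc 1 n) (hMcard : 2 ≤ M.card)
    (IH : ∀ m, m < n → ∀ g : Finset (Finset ℕ), IsRWTree m g → IsRecursive g →
      (∀ S ∈ g, Lab g S) → RWClosure Gen3T m g) :
    RWClosure Gen3T n fam := by
  classical
  obtain ⟨a, b, rfl⟩ := hrec M hM
  have hcard : (Finset.Icc a b).card = b + 1 - a := Nat.card_Icc a b
  have hab : a < b := by omega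
  have hsubM : Finset.Icc a b ⊆ Finset.Icc 1 n := (h.1 _ hM).2
  have ha1 : 1 ≤ a := by
    have := Finset.mem_Icc.1 (hsubM (Finset.mem_Icc.2 ⟨le_refl a, le_of_lt hab⟩))
    omega
  have hbn : b ≤ n := by
    have := Finset.mem_Icc.1 (hsubM (Finset.mem_Icc.2 ⟨le_of_lt hab, le_refl b⟩))
    omega
  have hcardlt : (Finset.Icc a b).card < n := by
    have h1 : (Finset.Icc a b) ⊂ Finset.Icc 1 n :=
      Finset.ssubset_iff_subset_ne.2 ⟨hsubM, hMne⟩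
    have := Finset.card_lt_card h1
    rwa [Nat.card_Icc 1 n, Nat.add_sub_cancel] at this
  set n₂ : ℕ := b - a + 1 with hn₂def
  set m : ℕ := n - (b - a) with hmdef
  have hn₂1 : 1 ≤ n₂ := by omega
  have hn₂lt : n₂ < n := by omega
  have hmlt : m < n := by omega
  have ham : a ≤ m := by omega
  set F1 : Finset (Finset ℕ) := fam.filter (fun S => ¬ S ⊂ Finset.Icc a b) with hF1def
  set F2 : Finset (Finset ℕ) := fam.filter (fun S => S ⊆ Finset.Icc a b) with hF2def
  set fam₁ : Finset (Finset ℕ) :=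
    F1.image (fun S => S.image (fun j => min j a + (j - b))) with hfam₁def
  set fam₂ : Finset (Finset ℕ) :=
    F2.image (fun S => S.image (fun j => j - (a - 1))) with hfam₂def
  -- dichotomy for members of F1
  have hdich : ∀ S ∈ F1, Finset.Icc a b ⊆ S ∨ Disjoint S (Finset.Icc a b) := by
    intro S hS
    have hSf := Finset.mem_filter.1 hS
    rcases h.2.2 S hSf.1 (Finset.Icc a b) hM with hc | hc | hc
    · left
      rcases eq_or_ne S (Finset.Icc a b) with he | hne'
      · exact he ▸ Finset.Subset.refl _
      · exact absurd (Finset.ssubset_iff_subset_ne.2 ⟨hc, hne'⟩) hSf.2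
    · exact Or.inl hc
    · exact Or.inr hc
  -- identity A : relabL ∘ contraction = id
  have hidA : ∀ S : Finset ℕ,
      (Finset.Icc a b ⊆ S ∨ Disjoint S (Finset.Icc a b)) →
      relabL a n₂ (S.image (fun j => min j a + (j - b))) = S := by
    intro S hdi
    ext k
    rw [mem_relabL hn₂1]
    simp only [Finset.mem_image]
    constructor
    · rintro (⟨hk, j, hjS, hgj⟩ | ⟨hk1, hk2, j, hjS, hgj⟩ | ⟨hk, j, hjS, hgj⟩)
      · have : j = k := by omega
        exact this ▸ hjS
      · have hjab : a ≤ j ∧ j ≤ b := by omega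
        rcases hdi with hdi | hdi
        · exact hdi (Finset.mem_Icc.2 ⟨by omega, by omega⟩)
        · exact absurd (Finset.mem_Icc.2 hjab) (Finset.disjoint_left.1 hdi hjS)
      · have : j = k := by omega
        exact this ▸ hjS
    · intro hkS
      rcases Nat.lt_or_ge k a with hk | hk
      · exact Or.inl ⟨hk, k, hkS, by omega⟩
      · rcases le_or_gt k b with hk2 | hk2
        · exact Or.inr (Or.inl ⟨by omega, by omega, k, hkS, by omega⟩)
        · exact Or.inr (Or.inr ⟨by omega, k, hkS, by omega⟩)
  -- identity B : relabR ∘ shift = id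
  have hidB : ∀ S : Finset ℕ, S ⊆ Finset.Icc a b →
      relabR a (S.image (fun j => j - (a - 1))) = S := by
    intro S hS
    ext k
    rw [mem_relabR]
    simp only [Finset.mem_image]
    constructor
    · rintro ⟨j', ⟨j, hjS, rfl⟩, hk⟩
      have := Finset.mem_Icc.1 (hS hjS)
      have : j = k := by omega
      exact this ▸ hjS
    · intro hkS
      have := Finset.mem_Icc.1 (hS hkS)
      exact ⟨k - (a - 1), ⟨k, hkS, rfl⟩, by omega⟩
  -- the images recover the filters
  have hF1img : fam₁.image (relabL a n₂) = F1 := by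
    rw [hfam₁def, Finset.image_image]
    have heqon : Set.EqOn ((relabL a n₂) ∘ (fun S => S.image (fun j => min j a + (j - b))))
        id F1 := by
      intro S hS
      exact hidA S (hdich S (Finset.mem_coe.1 hS))
    rw [Finset.image_congr heqon, Finset.image_id]
  have hF2img : fam₂.image (relabR a) = F2 := by
    rw [hfam₂def, Finset.image_image]
    have heqon : Set.EqOn ((relabR a) ∘ (fun S => S.image (fun j => j - (a - 1))))
        id F2 := by
      intro S hS
      exact hidB S (Finset.mem_filter.1 (Finset.mem_coe.1 hS)).2
    rw [Finset.image_congr heqon, Finset.image_id]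
  -- reflection of inclusions
  have hrefl₁ : ∀ U ∈ F1, ∀ V ∈ F1,
      U.image (fun j => min j a + (j - b)) ⊆ V.image (fun j => min j a + (j - b)) →
      U ⊆ V := by
    intro U hU V hV hsub
    have := relabL_mono (x := a) (n := n₂) hsub
    rwa [hidA U (hdich U hU), hidA V (hdich V hV)] at this
  have hrefl₂ : ∀ U ∈ F2, ∀ V ∈ F2,
      U.image (fun j => j - (a - 1)) ⊆ V.image (fun j => j - (a - 1)) → U ⊆ V := by
    intro U hU V hV hsub
    have h2 : relabR a (U.image (fun j => j - (a - 1))) ⊆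
        relabR a (V.image (fun j => j - (a - 1))) := Finset.image_subset_image hsub
    rwa [hidB U (Finset.mem_filter.1 hU).2, hidB V (Finset.mem_filter.1 hV).2] at h2
  have hbounds : ∀ S ∈ fam, ∀ j ∈ S, 1 ≤ j ∧ j ≤ n := by
    intro S hS j hj
    exact Finset.mem_Icc.1 ((h.1 S hS).2 hj)
  -- goods for fam₂
  have hroot₂ : (Finset.Icc a b).image (fun j => j - (a - 1)) = Finset.Icc 1 n₂ := by
    ext k
    simp only [Finset.mem_image, Finset.mem_Icc]
    constructor
    · rintro ⟨j, hj, rfl⟩; omega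
    · intro hk; exact ⟨k + (a - 1), by omega, by omega⟩
  have hMF2 : Finset.Icc a b ∈ F2 := Finset.mem_filter.2 ⟨hM, Finset.Subset.refl _⟩
  have good₂ : IsRWTree n₂ fam₂ ∧ IsRecursive fam₂ ∧ ∀ S ∈ fam₂, Lab fam₂ S := by
    refine ⟨⟨?_, ?_, ?_⟩, ?_, ?_⟩
    · rintro S hS
      obtain ⟨U, hU, rfl⟩ := Finset.mem_image.1 hS
      have hUf := Finset.mem_filter.1 hU
      refine ⟨(h.1 U hUf.1).1.image _, ?_⟩
      rw [← hroot₂]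
      exact Finset.image_subset_image hUf.2
    · rw [← hroot₂]
      exact Finset.mem_image.2 ⟨_, hMF2, rfl⟩
    · rintro S hS T hT
      obtain ⟨U, hU, rfl⟩ := Finset.mem_image.1 hS
      obtain ⟨V, hV, rfl⟩ := Finset.mem_image.1 hT
      have hUf := Finset.mem_filter.1 hU
      have hVf := Finset.mem_filter.1 hV
      rcases h.2.2 U hUf.1 V hVf.1 with hc | hc | hc
      · exact Or.inl (Finset.image_subset_image hc)
      · exact Or.inr (Or.inl (Finset.image_subset_image hc))
      · refine Or.inr (Or.inr (Finset.disjoint_left.2 ?_))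
        rintro k hkU hkV
        obtain ⟨j1, hj1, he1⟩ := Finset.mem_image.1 hkU
        obtain ⟨j2, hj2, he2⟩ := Finset.mem_image.1 hkV
        have hb1 := Finset.mem_Icc.1 (hUf.2 hj1)
        have hb2 := Finset.mem_Icc.1 (hVf.2 hj2)
        have : j1 = j2 := by omega
        exact Finset.disjoint_left.1 hc hj1 (this ▸ hj2)
    · rintro S hS
      obtain ⟨U, hU, rfl⟩ := Finset.mem_image.1 hS
      have hUf := Finset.mem_filter.1 hU
      obtain ⟨c, d, rfl⟩ := hrec U hUf.1
      obtain ⟨⟨y, hy⟩, -⟩ := h.1 _ hUf.1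
      have hcd : c ≤ d := by
        have := Finset.mem_Icc.1 hy; omega
      have hc1 := Finset.mem_Icc.1 (hUf.2 (Finset.mem_Icc.2 ⟨le_refl c, hcd⟩))
      have hd1 := Finset.mem_Icc.1 (hUf.2 (Finset.mem_Icc.2 ⟨hcd, le_refl d⟩))
      refine ⟨c - (a - 1), d - (a - 1), ?_⟩
      ext k
      simp only [Finset.mem_image, Finset.mem_Icc]
      constructor
      · rintro ⟨j, hj, rfl⟩; omega
      · intro hk; exact ⟨k + (a - 1), by omega, by omega⟩
    · rintro S hS
      obtain ⟨U, hU, rfl⟩ := Finset.mem_image.1 hS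
      have hUf := Finset.mem_filter.1 hU
      obtain ⟨ℓ, hℓU, hℓmax⟩ := hlab U hUf.1
      refine ⟨ℓ - (a - 1), Finset.mem_image.2 ⟨ℓ, hℓU, rfl⟩, ?_⟩
      rintro V' hV' hmem hss
      obtain ⟨V, hV, rfl⟩ := Finset.mem_image.1 hV'
      have hVf := Finset.mem_filter.1 hV
      obtain ⟨j, hjV, hje⟩ := Finset.mem_image.1 hmem
      have hbj := Finset.mem_Icc.1 (hVf.2 hjV)
      have hbℓ := Finset.mem_Icc.1 (hUf.2 hℓU)
      have : j = ℓ := by omega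
      subst this
      refine hℓmax V hVf.1 hjV (Finset.ssubset_iff_subset_ne.2
        ⟨hrefl₂ V hV U hU hss.subset, fun he => ?_⟩)
      exact (Finset.ssubset_iff_subset_ne.1 hss).2 (by rw [he])
  -- goods for fam₁
  have hrootF1 : Finset.Icc 1 n ∈ F1 := by
    refine Finset.mem_filter.2 ⟨h.2.1, fun hss => ?_⟩
    exact hMne (Finset.Subset.antisymm hsubM hss.subset)
  have hroot₁ : (Finset.Icc 1 n).image (fun j => min j a + (j - b)) = Finset.Icc 1 m := by
    ext k
    simp only [Finset.mem_image, Finset.mem_Icc]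
    constructor
    · rintro ⟨j, hj, rfl⟩; omega
    · intro hk
      refine ⟨if k ≤ a then k else k + (b - a), ?_, ?_⟩ <;> split_ifs <;> omega
  have good₁ : IsRWTree m fam₁ ∧ IsRecursive fam₁ ∧ ∀ S ∈ fam₁, Lab fam₁ S := by
    refine ⟨⟨?_, ?_, ?_⟩, ?_, ?_⟩
    · rintro S hS
      obtain ⟨U, hU, rfl⟩ := Finset.mem_image.1 hS
      have hUf := Finset.mem_filter.1 hU
      refine ⟨(h.1 U hUf.1).1.image _, ?_⟩
      intro k hk
      obtain ⟨j, hj, rfl⟩ := Finset.mem_image.1 hk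
      have := hbounds U hUf.1 j hj
      rw [Finset.mem_Icc]
      omega
    · rw [← hroot₁]
      exact Finset.mem_image.2 ⟨_, hrootF1, rfl⟩
    · rintro S hS T hT
      obtain ⟨U, hU, rfl⟩ := Finset.mem_image.1 hS
      obtain ⟨V, hV, rfl⟩ := Finset.mem_image.1 hT
      have hUf := Finset.mem_filter.1 hU
      have hVf := Finset.mem_filter.1 hV
      rcases h.2.2 U hUf.1 V hVf.1 with hc | hc | hc
      · exact Or.inl (Finset.image_subset_image hc)
      · exact Or.inr (Or.inl (Finset.image_subset_image hc))
      · refine Or.inr (Or.inr (Finset.disjoint_left.2 ?_))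
        rintro k hkU hkV
        obtain ⟨j1, hj1, he1⟩ := Finset.mem_image.1 hkU
        obtain ⟨j2, hj2, he2⟩ := Finset.mem_image.1 hkV
        by_cases hka : k = a
        · have hj1ab : a ≤ j1 ∧ j1 ≤ b := by omega
          have hj2ab : a ≤ j2 ∧ j2 ≤ b := by omega
          have hMU : Finset.Icc a b ⊆ U := by
            rcases hdich U hU with hd | hd
            · exact hd
            · exact absurd (Finset.mem_Icc.2 hj1ab) (Finset.disjoint_left.1 hd hj1)
          have hMV : Finset.Icc a b ⊆ V := by
            rcases hdich V hV with hd | hd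
            · exact hd
            · exact absurd (Finset.mem_Icc.2 hj2ab) (Finset.disjoint_left.1 hd hj2)
          have haM : a ∈ Finset.Icc a b := Finset.mem_Icc.2 ⟨le_refl a, le_of_lt hab⟩
          exact Finset.disjoint_left.1 hc (hMU haM) (hMV haM)
        · have : j1 = j2 := by omega
          exact Finset.disjoint_left.1 hc hj1 (this ▸ hj2)
    · rintro S hS
      obtain ⟨U, hU, rfl⟩ := Finset.mem_image.1 hS
      have hUf := Finset.mem_filter.1 hU
      obtain ⟨c, d, rfl⟩ := hrec U hUf.1
      obtain ⟨⟨y, hy⟩, -⟩ := h.1 _ hUf.1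
      have hcd : c ≤ d := by
        have := Finset.mem_Icc.1 hy; omega
      have hbc := hbounds _ hUf.1 c (Finset.mem_Icc.2 ⟨le_refl c, hcd⟩)
      have hbd := hbounds _ hUf.1 d (Finset.mem_Icc.2 ⟨hcd, le_refl d⟩)
      rcases hdich _ hU with hd | hd
      · -- M ⊆ Icc c d
        have hca : c ≤ a := by
          have := Finset.mem_Icc.1 (hd (Finset.mem_Icc.2 ⟨le_refl a, le_of_lt hab⟩))
          omega
        have hbd' : b ≤ d := by
          have := Finset.mem_Icc.1 (hd (Finset.mem_Icc.2 ⟨le_of_lt hab, le_refl b⟩))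
          omega
        refine ⟨c, d - (b - a), ?_⟩
        ext k
        simp only [Finset.mem_image, Finset.mem_Icc]
        constructor
        · rintro ⟨j, hj, rfl⟩; omega
        · intro hk
          refine ⟨if k ≤ a then k else k + (b - a), ?_, ?_⟩ <;> split_ifs <;> omega
      · -- disjoint
        have hcases : d < a ∨ b < c := by
          by_contra hcon
          push_neg at hcon
          exact Finset.disjoint_left.1 hd
            (Finset.mem_Icc.2 ⟨Nat.le_max_right a c, by omega⟩ :
              max a c ∈ Finset.Icc c d)
            (Finset.mem_Icc.2 ⟨Nat.le_max_left a c, by omega⟩)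
        rcases hcases with hcase | hcase
        · refine ⟨c, d, ?_⟩
          ext k
          simp only [Finset.mem_image, Finset.mem_Icc]
          constructor
          · rintro ⟨j, hj, rfl⟩; omega
          · intro hk; exact ⟨k, by omega, by omega⟩
        · refine ⟨c - (b - a), d - (b - a), ?_⟩
          ext k
          simp only [Finset.mem_image, Finset.mem_Icc]
          constructor
          · rintro ⟨j, hj, rfl⟩; omega
          · intro hk; exact ⟨k + (b - a), by omega, by omega⟩
    · rintro S hS
      obtain ⟨U, hU, rfl⟩ := Finset.mem_image.1 hS
      have hUf := Finset.mem_filter.1 hU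
      obtain ⟨ℓ, hℓU, hℓmax⟩ := hlab U hUf.1
      by_cases hℓM : ℓ ∈ Finset.Icc a b
      · have hMU : Finset.Icc a b ⊆ U := by
          rcases hdich U hU with hd | hd
          · exact hd
          · exact absurd hℓM (Finset.disjoint_left.1 hd hℓU)
        refine ⟨a, Finset.mem_image.2
          ⟨a, hMU (Finset.mem_Icc.2 ⟨le_refl a, le_of_lt hab⟩), by omega⟩, ?_⟩
        rintro V' hV' hmem hss
        obtain ⟨V, hV, rfl⟩ := Finset.mem_image.1 hV'
        obtain ⟨j, hjV, hgj⟩ := Finset.mem_image.1 hmem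
        have hjab : a ≤ j ∧ j ≤ b := by omega
        have hMV : Finset.Icc a b ⊆ V := by
          rcases hdich V hV with hd | hd
          · exact hd
          · exact absurd (Finset.mem_Icc.2 hjab) (Finset.disjoint_left.1 hd hjV)
        refine hℓmax V (Finset.mem_filter.1 hV).1 (hMV hℓM)
          (Finset.ssubset_iff_subset_ne.2 ⟨hrefl₁ V hV U hU hss.subset, fun he => ?_⟩)
        exact (Finset.ssubset_iff_subset_ne.1 hss).2 (by rw [he])
      · rw [Finset.mem_Icc] at hℓM
        push_neg at hℓM
        refine ⟨min ℓ a + (ℓ - b), Finset.mem_image.2 ⟨ℓ, hℓU, rfl⟩, ?_⟩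
        rintro V' hV' hmem hss
        obtain ⟨V, hV, rfl⟩ := Finset.mem_image.1 hV'
        obtain ⟨j, hjV, hgj⟩ := Finset.mem_image.1 hmem
        have : j = ℓ := by omega
        subst this
        refine hℓmax V (Finset.mem_filter.1 hV).1 hjV
          (Finset.ssubset_iff_subset_ne.2 ⟨hrefl₁ V hV U hU hss.subset, fun he => ?_⟩)
        exact (Finset.ssubset_iff_subset_ne.1 hss).2 (by rw [he])
  -- the composition recovers fam
  have hred₂ : ¬ IsRed fam₂ (Finset.Icc 1 n₂) :=
    not_isRed_of_lab (good₂.2.2 _ good₂.1.2.1)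
  have heqcomp : rwCompose n₂ a fam₁ fam₂ = fam := by
    rw [rwCompose_eq hred₂, hF1img, hF2img, show a + n₂ - 1 = b by omega]
    ext S
    rw [Finset.mem_union, Finset.mem_sdiff, Finset.mem_filter, Finset.mem_filter,
      Finset.mem_singleton]
    constructor
    · rintro (⟨hS, -⟩ | ⟨⟨hS, -⟩, -⟩) <;> exact hS
    · intro hS
      by_cases hss : S ⊂ Finset.Icc a b
      · exact Or.inr ⟨⟨hS, hss.subset⟩, fun he => not_ssubset_self (he ▸ hss)⟩
      · exact Or.inl ⟨hS, hss⟩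
  have h₁ := IH m hmlt fam₁ good₁.1 good₁.2.1 good₁.2.2
  have h₂ := IH n₂ hn₂lt fam₂ good₂.1 good₂.2.1 good₂.2.2
  have hcomp := RWClosure.comp h₁ h₂ ha1 ham
  rwa [show m + n₂ - 1 = n by omega, heqcomp] at hcomp

lemma relabL_singleton {x n i : ℕ} :
    relabL x n {i} = if i < x then {i}
      else if i = x then Finset.Icc x (x + n - 1) else {i + n - 1} :=
  Finset.singleton_biUnion

lemma image_relabL_flatF {n x : ℕ} (hn2 : 2 ≤ n) (hx1 : 1 ≤ x) (hx : x ≤ n - 1)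
    {C' : Finset ℕ} (hC' : ∀ i ∈ C', i ≠ x) :
    (flatF (n-1) C').image (relabL x 2) =
      flatF n (C'.image fun i => if i < x then i else i + 1) := by
  unfold flatF
  rw [Finset.image_insert, Finset.image_image, Finset.image_image]
  have hroot : relabL x 2 (Finset.Icc 1 (n-1)) = Finset.Icc 1 n := by
    rw [relabL_Icc_root (by norm_num) hx1 hx]
    congr 1
    omega
  rw [hroot]
  congr 1
  apply Finset.image_congr
  intro i hi
  simp only [Function.comp_apply]
  rw [relabL_singleton]
  have hne := hC' i hi
  rcases lt_or_gt_of_ne hne with hlt | hgt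
  · rw [if_pos hlt, if_pos hlt]
  · rw [if_neg (by omega : ¬ i < x), if_neg hne, if_neg (by omega : ¬ i < x)]
    congr 1

lemma union_singleton_flatF {n : ℕ} {C : Finset ℕ} {j : ℕ} (hj : j ∈ C) :
    flatF n (C.erase j) ∪ {({j} : Finset ℕ)} = flatF n C := by
  ext S
  rw [Finset.mem_union, mem_flatF, mem_flatF, Finset.mem_singleton]
  constructor
  · rintro ((rfl | ⟨i, hi, rfl⟩) | rfl)
    · exact Or.inl rfl
    · exact Or.inr ⟨i, Finset.mem_of_mem_erase hi, rfl⟩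
    · exact Or.inr ⟨j, hj, rfl⟩
  · rintro (rfl | ⟨i, hi, rfl⟩)
    · exact Or.inl (Or.inl rfl)
    · by_cases hij : i = j
      · subst hij; exact Or.inr rfl
      · exact Or.inl (Or.inr ⟨i, Finset.mem_erase.2 ⟨hij, hi⟩, rfl⟩)

lemma step_flat {n : ℕ} {fam : Finset (Finset ℕ)} (hn : 2 ≤ n)
    (h : IsRWTree n fam) (hrec : IsRecursive fam) (hlab : ∀ S ∈ fam, Lab fam S)
    (Hflat : ∀ S ∈ fam, S ≠ Finset.Icc 1 n → ∃ i, S = {i})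
    (IH : ∀ m, m < n → ∀ g : Finset (Finset ℕ), IsRWTree m g → IsRecursive g →
      (∀ S ∈ g, Lab g S) → RWClosure Gen3T m g) :
    RWClosure Gen3T n fam := by
  classical
  set C : Finset ℕ := (Finset.Icc 1 n).filter (fun i => {i} ∈ fam) with hCdef
  have hCmem : ∀ i ∈ C, (1 ≤ i ∧ i ≤ n) ∧ {i} ∈ fam := by
    intro i hi
    have := Finset.mem_filter.1 hi
    exact ⟨Finset.mem_Icc.1 this.1, this.2⟩
  have hmemC : ∀ i, 1 ≤ i → i ≤ n → {i} ∈ fam → i ∈ C :=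
    fun i h1 h2 h3 => Finset.mem_filter.2 ⟨Finset.mem_Icc.2 ⟨h1, h2⟩, h3⟩
  have hfamC : fam = flatF n C := by
    ext S
    rw [mem_flatF]
    constructor
    · intro hS
      by_cases hroot : S = Finset.Icc 1 n
      · exact Or.inl hroot
      · obtain ⟨i, rfl⟩ := Hflat S hS hroot
        have hsub := (h.1 _ hS).2
        have hi := Finset.mem_Icc.1 (hsub (Finset.mem_singleton_self i))
        exact Or.inr ⟨i, hmemC i hi.1 hi.2 hS, rfl⟩
    · rintro (rfl | ⟨i, hi, rfl⟩)
      · exact h.2.1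
      · exact (hCmem i hi).2
  -- the largest index not appearing as a singleton child
  have hDne : ((Finset.Icc 1 n).filter (fun i => {i} ∉ fam)).Nonempty := by
    obtain ⟨ℓ, hℓ, hℓmax⟩ := hlab _ h.2.1
    refine ⟨ℓ, Finset.mem_filter.2 ⟨hℓ, fun hc => ?_⟩⟩
    refine hℓmax _ hc (Finset.mem_singleton_self ℓ) (Finset.ssubset_iff_subset_ne.2
      ⟨Finset.singleton_subset_iff.2 hℓ, fun he => ?_⟩)
    have := congrArg Finset.card he
    rw [Finset.card_singleton, Nat.card_Icc] at this
    omega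
  set t : ℕ := ((Finset.Icc 1 n).filter (fun i => {i} ∉ fam)).max' hDne with htdef
  have htD := Finset.max'_mem _ hDne
  rw [Finset.mem_filter, Finset.mem_Icc] at htD
  have ht1 : 1 ≤ t := htD.1.1
  have htn : t ≤ n := htD.1.2
  have htC : t ∉ C := fun hc => htD.2 (hCmem t hc).2
  have hCt : ∀ j, t < j → j ≤ n → j ∈ C := by
    intro j hjt hjn
    by_contra hc
    have hjfam : {j} ∉ fam := fun hf => hc (hmemC j (by omega) hjn hf)
    have : j ≤ t := Finset.le_max' _ j (Finset.mem_filter.2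
      ⟨Finset.mem_Icc.2 ⟨by omega, hjn⟩, hjfam⟩)
    omega
  rw [hfamC]
  by_cases htlt : t < n
  · -- compose with Tprec at x = t
    have ht1C : t + 1 ∈ C := hCt (t+1) (by omega) (by omega)
    set C' : Finset ℕ := (C.erase (t+1)).image (fun i => if i ≤ t then i else i - 1)
      with hC'def
    have hC'mem : ∀ i' ∈ C', (1 ≤ i' ∧ i' ≤ n - 1) ∧ i' ≠ t := by
      intro i' hi'
      obtain ⟨i, hi, rfl⟩ := Finset.mem_image.1 hi'
      have hine := (Finset.mem_erase.1 hi).1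
      have hiC := Finset.mem_of_mem_erase hi
      have hb := (hCmem i hiC).1
      have hit : i ≠ t := fun he => htC (he ▸ hiC)
      constructor
      · constructor <;> (split_ifs <;> omega)
      · split_ifs <;> omega
    have hgood := flatF_good (n := n - 1) (C := C') (by omega)
      (fun i hi => (hC'mem i hi).1) ht1 (by omega) (fun hc => (hC'mem t hc).2 rfl)
    have hcl1 : RWClosure Gen3T (n-1) (flatF (n-1) C') :=
      IH (n-1) (by omega) _ hgood.1 hgood.2.1 hgood.2.2
    have hcomp := RWClosure.comp hcl1
      (RWClosure.gen (Or.inr ⟨rfl, Or.inl rfl⟩) : RWClosure Gen3T 2 Tprec)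
      ht1 (by omega : t ≤ n - 1)
    have harity : (n - 1) + 2 - 1 = n := by omega
    rw [harity] at hcomp
    have hred : ¬ IsRed Tprec (Finset.Icc 1 2) :=
      not_isRed_of_lab (inv_Tprec.2.2 _ inv_Tprec.2.1)
    have heq : rwCompose 2 t (flatF (n-1) C') Tprec = flatF n C := by
      rw [rwCompose_eq hred]
      have hb : t + 2 - 1 = t + 1 := by omega
      rw [hb]
      have hf2a : relabR t {1, 2} = Finset.Icc t (t+1) := by
        ext k
        rw [mem_relabR, Finset.mem_Icc]
        constructor
        · rintro ⟨j, hj, he⟩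
          simp only [Finset.mem_insert, Finset.mem_singleton] at hj
          rcases hj with rfl | rfl <;> omega
        · intro hk
          by_cases hkt : k = t
          · exact ⟨1, by simp, by omega⟩
          · exact ⟨2, by simp, by omega⟩
      have hf2b : relabR t {2} = {t+1} := by
        ext k
        rw [mem_relabR]
        simp only [Finset.mem_singleton]
        constructor
        · rintro ⟨j, rfl, he⟩; omega
        · rintro rfl; exact ⟨2, rfl, by omega⟩
      have hnotmem : Finset.Icc t (t+1) ∉ ({({t+1} : Finset ℕ)} : Finset (Finset ℕ)) := by
        rw [Finset.mem_singleton]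
        intro he
        have := congrArg Finset.card he
        rw [Finset.card_singleton, Nat.card_Icc] at this
        omega
      have hf2 : Tprec.image (relabR t) \ {Finset.Icc t (t+1)} = {({t+1} : Finset ℕ)} := by
        rw [Tprec, Finset.image_insert, Finset.image_singleton, hf2a, hf2b,
          Finset.sdiff_singleton_eq_erase, Finset.erase_insert hnotmem]
      rw [hf2, image_relabL_flatF hn ht1 (by omega) (fun i hi => (hC'mem i hi).2)]
      have himg : C'.image (fun i => if i < t then i else i + 1) = C.erase (t+1) := by
        rw [hC'def, Finset.image_image]
        have : ∀ i ∈ C.erase (t+1),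
            ((fun i => if i < t then i else i + 1) ∘ (fun i => if i ≤ t then i else i - 1)) i
              = id i := by
          intro i hi
          have hine := (Finset.mem_erase.1 hi).1
          have hiC := Finset.mem_of_mem_erase hi
          have hb' := (hCmem i hiC).1
          have hit : i ≠ t := fun he => htC (he ▸ hiC)
          simp only [Function.comp_apply, id]
          split_ifs <;> omega
        rw [Finset.image_congr this, Finset.image_id]
      rw [himg, union_singleton_flatF ht1C]
    rw [← heq]
    exact hcomp
  · -- t = n
    have htn' : t = n := by omega
    have hnC : n ∉ C := htn' ▸ htC
    by_cases hn1C : n - 1 ∈ C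
    · -- compose with Tsucc at x = n-1
      set C' : Finset ℕ := C.erase (n-1) with hC'def
      have hC'mem : ∀ i ∈ C', (1 ≤ i ∧ i ≤ n - 1) ∧ i ≠ n - 1 := by
        intro i hi
        have hine := (Finset.mem_erase.1 hi).1
        have hiC := Finset.mem_of_mem_erase hi
        have hb := (hCmem i hiC).1
        have : i ≠ n := fun he => hnC (he ▸ hiC)
        exact ⟨⟨by omega, by omega⟩, hine⟩
      have hgood := flatF_good (n := n - 1) (C := C') (by omega)
        (fun i hi => (hC'mem i hi).1) (by omega : 1 ≤ n - 1) (le_refl _)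
        (fun hc => (hC'mem _ hc).2 rfl)
      have hcl1 : RWClosure Gen3T (n-1) (flatF (n-1) C') :=
        IH (n-1) (by omega) _ hgood.1 hgood.2.1 hgood.2.2
      have hcomp := RWClosure.comp hcl1
        (RWClosure.gen (Or.inr ⟨rfl, Or.inr (Or.inl rfl)⟩) : RWClosure Gen3T 2 Tsucc)
        (by omega : 1 ≤ n - 1) (le_refl _)
      have harity : (n - 1) + 2 - 1 = n := by omega
      rw [harity] at hcomp
      have hred : ¬ IsRed Tsucc (Finset.Icc 1 2) :=
        not_isRed_of_lab (inv_Tsucc.2.2 _ inv_Tsucc.2.1)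
      have heq : rwCompose 2 (n-1) (flatF (n-1) C') Tsucc = flatF n C := by
        rw [rwCompose_eq hred]
        have hb : n - 1 + 2 - 1 = n := by omega
        rw [hb]
        have hf2a : relabR (n-1) {1, 2} = Finset.Icc (n-1) n := by
          ext k
          rw [mem_relabR, Finset.mem_Icc]
          constructor
          · rintro ⟨j, hj, he⟩
            simp only [Finset.mem_insert, Finset.mem_singleton] at hj
            rcases hj with rfl | rfl <;> omega
          · intro hk
            by_cases hkt : k = n - 1
            · exact ⟨1, by simp, by omega⟩
            · exact ⟨2, by simp, by omega⟩
        have hf2b : relabR (n-1) {1} = {(n-1 : ℕ)} := by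
          ext k
          rw [mem_relabR]
          simp only [Finset.mem_singleton]
          constructor
          · rintro ⟨j, rfl, he⟩; omega
          · rintro rfl; exact ⟨1, rfl, by omega⟩
        have hnotmem : Finset.Icc (n-1) n ∉ ({({(n-1 : ℕ)} : Finset ℕ)} : Finset (Finset ℕ)) := by
          rw [Finset.mem_singleton]
          intro he
          have := congrArg Finset.card he
          rw [Finset.card_singleton, Nat.card_Icc] at this
          omega
        have hf2 : Tsucc.image (relabR (n-1)) \ {Finset.Icc (n-1) n} =
            ({({(n-1 : ℕ)} : Finset ℕ)} : Finset (Finset ℕ)) := by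
          rw [Tsucc, Finset.image_insert, Finset.image_singleton, hf2a, hf2b,
            Finset.sdiff_singleton_eq_erase, Finset.erase_insert hnotmem]
        rw [hf2, image_relabL_flatF hn (by omega) (le_refl _) (fun i hi => (hC'mem i hi).2)]
        have himg : C'.image (fun i => if i < n-1 then i else i + 1) = C.erase (n-1) := by
          rw [hC'def]
          have : ∀ i ∈ C.erase (n-1),
              (fun i => if i < n-1 then i else i + 1) i = id i := by
            intro i hi
            have := (hC'mem i hi).1
            have := (hC'mem i hi).2
            simp only [id]
            split_ifs <;> omega
          rw [Finset.image_congr this, Finset.image_id]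
        rw [himg, union_singleton_flatF hn1C]
      rw [← heq]
      exact hcomp
    · -- compose with Tmid at x = n-1
      have hC'mem : ∀ i ∈ C, (1 ≤ i ∧ i ≤ n - 1) ∧ i ≠ n - 1 := by
        intro i hi
        have hb := (hCmem i hi).1
        have h1 : i ≠ n := fun he => hnC (he ▸ hi)
        have h2 : i ≠ n - 1 := fun he => hn1C (he ▸ hi)
        exact ⟨⟨by omega, by omega⟩, h2⟩
      have hgood := flatF_good (n := n - 1) (C := C) (by omega)
        (fun i hi => (hC'mem i hi).1) (by omega : 1 ≤ n - 1) (le_refl _)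
        (fun hc => (hC'mem _ hc).2 rfl)
      have hcl1 : RWClosure Gen3T (n-1) (flatF (n-1) C) :=
        IH (n-1) (by omega) _ hgood.1 hgood.2.1 hgood.2.2
      have hcomp := RWClosure.comp hcl1
        (RWClosure.gen (Or.inr ⟨rfl, Or.inr (Or.inr rfl)⟩) : RWClosure Gen3T 2 Tmid)
        (by omega : 1 ≤ n - 1) (le_refl _)
      have harity : (n - 1) + 2 - 1 = n := by omega
      rw [harity] at hcomp
      have hred : ¬ IsRed Tmid (Finset.Icc 1 2) :=
        not_isRed_of_lab (inv_Tmid.2.2 _ inv_Tmid.2.1)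
      have heq : rwCompose 2 (n-1) (flatF (n-1) C) Tmid = flatF n C := by
        rw [rwCompose_eq hred]
        have hb : n - 1 + 2 - 1 = n := by omega
        rw [hb]
        have hf2a : relabR (n-1) {1, 2} = Finset.Icc (n-1) n := by
          ext k
          rw [mem_relabR, Finset.mem_Icc]
          constructor
          · rintro ⟨j, hj, he⟩
            simp only [Finset.mem_insert, Finset.mem_singleton] at hj
            rcases hj with rfl | rfl <;> omega
          · intro hk
            by_cases hkt : k = n - 1
            · exact ⟨1, by simp, by omega⟩
            · exact ⟨2, by simp, by omega⟩
        have hf2 : Tmid.image (relabR (n-1)) \ {Finset.Icc (n-1) n} = ∅ := by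
          rw [Tmid, Finset.image_singleton, hf2a, Finset.sdiff_self]
        rw [hf2, Finset.union_empty,
          image_relabL_flatF hn (by omega) (le_refl _) (fun i hi => (hC'mem i hi).2)]
        have himg : C.image (fun i => if i < n-1 then i else i + 1) = C := by
          have : ∀ i ∈ C, (fun i => if i < n-1 then i else i + 1) i = id i := by
            intro i hi
            have := (hC'mem i hi).1
            have := (hC'mem i hi).2
            simp only [id]
            split_ifs <;> omega
          rw [Finset.image_congr this, Finset.image_id]
        rw [himg]
      rw [← heq]
      exact hcomp

lemma backward : ∀ n : ℕ, ∀ fam : Finset (Finset ℕ), IsRWTree n fam → IsRecursive fam →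
    (∀ S ∈ fam, Lab fam S) → RWClosure Gen3T n fam := by
  intro n
  induction n using Nat.strong_induction_on with
  | _ n IH =>
    intro fam h hrec hlab
    rcases Nat.lt_or_ge n 2 with h2 | h2
    · -- n = 0 or 1
      rcases Nat.lt_or_ge n 1 with h1 | h1
      · exfalso
        have := (h.1 _ h.2.1).1
        rw [Finset.Icc_eq_empty (by omega)] at this
        exact Finset.not_nonempty_empty this
      · -- n = 1
        have hn1 : n = 1 := by omega
        subst hn1
        have hfam : fam = unitT := by
          rw [unitT]
          apply Finset.eq_singleton_iff_unique_mem.2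
          constructor
          · have := h.2.1
            rwa [Finset.Icc_self] at this
          · intro S hS
            obtain ⟨⟨y, hy⟩, hsub⟩ := h.1 S hS
            rw [Finset.Icc_self] at hsub
            exact Finset.Subset.antisymm hsub
              (Finset.singleton_subset_iff.2 (by
                have := hsub hy
                rw [Finset.mem_singleton] at this
                rwa [this] at hy))
        rw [hfam]
        exact RWClosure.gen (Or.inl ⟨rfl, rfl⟩)
    · by_cases HM : ∃ M ∈ fam, M ≠ Finset.Icc 1 n ∧ 2 ≤ M.card
      · obtain ⟨M, hM, hMne, hMcard⟩ := HM
        exact step_big h2 h hrec hlab hM hMne hMcard IH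
      · refine step_flat h2 h hrec hlab ?_ IH
        intro S hS hSne
        push_neg at HM
        have hcard : S.card ≤ 1 := by
          have := HM S hS hSne
          omega
        obtain ⟨⟨y, hy⟩, -⟩ := h.1 S hS
        have : S.card = 1 := le_antisymm hcard (Finset.card_pos.2 ⟨y, hy⟩)
        exact Finset.card_eq_one.1 this

/-- A recursively labelled red and white tree lies in the closure of
`{T_≺, T_≻, T_∘}` if and only if it has no node with an empty label set. -/
theorem bwt_closure (n : ℕ) (fam : Finset (Finset ℕ))
    (h : IsRWTree n fam) (hrec : IsRecursive fam) :
    RWClosure Gen3T n fam ↔ ∀ S ∈ fam, (labelsOf fam S).Nonempty := by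
  constructor
  · intro hcl S hS
    exact ((closure_inv hcl).2.2 S hS).nonempty
  · intro hne
    exact backward n fam h hrec fun S hS => lab_of_nonempty (hne S hS)
end

section
/- Under the action of the symmetric group S_n on labelled red and white trees by relabelling, every orbit contains at least one recursively labelled tree; i.e., for every T ∈ BWTSL(n) there exists a permutation σ ∈ S_n such that the tree obtained from T by replacing each label i by σ(i) is recursively labelled. -/
open scoped Classical

/-! The label sets of the subtrees form a laminar family. For a maximal proper member `M`,
every other proper member lies inside `M` or inside its complement, so numbering `M` by an
initial segment of the interval and the complement by the rest, each recursively, makes every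
member a block of consecutive integers. -/

open Finset

variable {α β : Type*}

theorem Set.BijOn.union_of_disjoint {f : α → β} {s₁ s₂ : Set α} {t₁ t₂ : Set β}
    (h₁ : Set.BijOn f s₁ t₁) (h₂ : Set.BijOn f s₂ t₂) (ht : Disjoint t₁ t₂) :
    Set.BijOn f (s₁ ∪ s₂) (t₁ ∪ t₂) := by
  refine h₁.union h₂ ?_
  rintro x (hx | hx) y (hy | hy) hxy
  · exact h₁.injOn hx hy hxy
  · exact (ht.ne_of_mem (h₁.mapsTo hx) (h₂.mapsTo hy) hxy).elim
  · exact (ht.ne_of_mem (h₁.mapsTo hy) (h₂.mapsTo hx) hxy.symm).elim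
  · exact h₂.injOn hx hy hxy

theorem Set.BijOn.exists_perm_eqOn {f : α → α} {s : Set α} (hf : Set.BijOn f s s) :
    ∃ σ : Equiv.Perm α, Set.EqOn σ f s ∧ ∀ x ∉ s, σ x = x :=
  ⟨Equiv.Perm.ofSubtype (hf.equiv f), fun _ hx => Equiv.Perm.ofSubtype_apply_of_mem _ hx,
    fun _ hx => Equiv.Perm.ofSubtype_apply_of_not_mem _ hx⟩

theorem Finset.exists_bijOn_Ico (A : Finset α) (a : ℕ) :
    ∃ f : α → ℕ, Set.BijOn f A (Set.Ico a (a + #A)) := by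
  refine A.finite_toSet.exists_bijOn_of_encard_eq ?_
  rw [← Finset.coe_Ico, Set.encard_coe_eq_coe_finsetCard, Set.encard_coe_eq_coe_finsetCard,
    Nat.card_Ico, Nat.add_sub_cancel_left]

theorem bijOn_piecewise_Ico {A M : Finset α} (hMA : M ⊆ A) {f₁ f₂ : α → ℕ} {a : ℕ}
    (hf₁ : Set.BijOn f₁ M (Set.Ico a (a + #M)))
    (hf₂ : Set.BijOn f₂ ↑(A \ M) (Set.Ico (a + #M) (a + #M + #(A \ M)))) :
    Set.BijOn ((M : Set α).piecewise f₁ f₂) A (Set.Ico a (a + #A)) := by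
  have hcard : #(A \ M) + #M = #A := card_sdiff_add_card_eq_card hMA
  have hM := hf₁.congr (Set.piecewise_eqOn _ f₁ f₂).symm
  have hAM := hf₂.congr ((Set.piecewise_eqOn_compl _ f₁ f₂).mono
    (Set.subset_compl_iff_disjoint_right.mpr (disjoint_coe.mpr sdiff_disjoint))).symm
  have := hM.union_of_disjoint hAM Set.Ico_disjoint_Ico_same
  rwa [← coe_union, union_sdiff_of_subset hMA,
    Set.Ico_union_Ico_eq_Ico (by omega) (by omega), add_assoc, add_comm #M, hcard] at this

theorem Nat.exists_Icc_eq_Ico (c d : ℕ) : ∃ a b : ℕ, Set.Icc a b = Set.Ico c d := by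
  rcases lt_or_ge c d with hcd | hdc
  · exact ⟨c, d - 1, by ext; simp only [Set.mem_Icc, Set.mem_Ico]; omega⟩
  · exact ⟨1, 0, by simp [Set.Ico_eq_empty_of_le hdc]⟩

def IsLaminar (fam : Finset (Finset α)) : Prop :=
  ∀ S ∈ fam, ∀ T ∈ fam, S ⊆ T ∨ T ⊆ S ∨ Disjoint S T

namespace IsLaminar

variable {fam : Finset (Finset α)} {A M S : Finset α}

theorem mono {fam' : Finset (Finset α)} (hfam : IsLaminar fam) (h : fam' ⊆ fam) :
    IsLaminar fam' :=
  fun S hS T hT => hfam S (h hS) T (h hT)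

theorem subset_or_disjoint_of_maximal (hfam : IsLaminar fam)
    (hM : Maximal (· ∈ fam.filter fun T => T.Nonempty ∧ T ⊂ A) M) (hS : S ∈ fam) (hSA : S ⊂ A) :
    S ⊆ M ∨ Disjoint S M := by
  obtain ⟨hMfam, hMne, -⟩ := mem_filter.mp hM.prop
  rcases hfam S hS M hMfam with hSM | hMS | hSM
  · exact Or.inl hSM
  · exact Or.inl (hM.le_of_ge (mem_filter.mpr ⟨hS, hMne.mono hMS, hSA⟩) hMS)
  · exact Or.inr hSM

theorem exists_bijOn_Ico (hfam : IsLaminar fam) (hA : ∀ S ∈ fam, S ⊆ A)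
    (a : ℕ) : ∃ f : α → ℕ, Set.BijOn f A (Set.Ico a (a + #A)) ∧
      ∀ S ∈ fam, ∃ c d, f '' S = Set.Ico c d := by
  induction A using Finset.strongInduction generalizing fam a with
  | H A ih =>
  by_cases hproper : (fam.filter fun T => T.Nonempty ∧ T ⊂ A).Nonempty
  · obtain ⟨M, hM⟩ := Finset.exists_maximal hproper
    obtain ⟨-, hMne, hMA⟩ := mem_filter.mp hM.prop
    obtain ⟨f₁, hf₁, hfam₁⟩ := ih M hMA (hfam.mono (filter_subset (· ⊆ M) fam))
      (fun S hS => (mem_filter.mp hS).2) a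
    obtain ⟨f₂, hf₂, hfam₂⟩ := ih (A \ M) (sdiff_ssubset hMA.subset hMne)
      (hfam.mono (filter_subset (Disjoint · M) fam))
      (fun S hS => subset_sdiff.mpr ⟨hA S (mem_filter.mp hS).1, (mem_filter.mp hS).2⟩) (a + #M)
    have hf := bijOn_piecewise_Ico hMA.subset hf₁ hf₂
    refine ⟨_, hf, fun S hS => ?_⟩
    rcases (hA S hS).eq_or_ssubset with rfl | hSA
    · exact ⟨_, _, hf.image_eq⟩
    rcases hfam.subset_or_disjoint_of_maximal hM hS hSA with hSM | hSM
    · rw [((Set.piecewise_eqOn _ _ _).mono (coe_subset.mpr hSM)).image_eq]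
      exact hfam₁ S (mem_filter.mpr ⟨hS, hSM⟩)
    · rw [((Set.piecewise_eqOn_compl _ _ _).mono
        (Set.subset_compl_iff_disjoint_right.mpr (disjoint_coe.mpr hSM))).image_eq]
      exact hfam₂ S (mem_filter.mpr ⟨hS, hSM⟩)
  · obtain ⟨f, hf⟩ := A.exists_bijOn_Ico a
    refine ⟨f, hf, fun S hS => ?_⟩
    rcases S.eq_empty_or_nonempty with rfl | hSne
    · exact ⟨0, 0, by simp⟩
    obtain rfl : S = A := by
      by_contra hSA
      exact hproper ⟨S, mem_filter.mpr ⟨hS, hSne, (hA S hS).ssubset_of_ne hSA⟩⟩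
    exact ⟨_, _, hf.image_eq⟩

end IsLaminar

/-- Every orbit of the symmetric group acting on labelled red and
white trees by relabelling contains at least one recursively labelled tree. -/
theorem exists_recursive_in_orbit (n : ℕ) (fam : Finset (Finset ℕ))
    (h : IsRWTree n fam) :
    ∃ σ : Equiv.Perm ℕ, (∀ j ∉ Finset.Icc 1 n, σ j = j) ∧
      IsRecursive (fam.image fun S => S.image fun j => σ j) := by
  obtain ⟨f, hf, hfam⟩ := IsLaminar.exists_bijOn_Ico h.2.2 (fun S hS => (h.1 S hS).2) 1
  rw [Nat.card_Icc, Nat.add_sub_cancel, add_comm, Set.Ico_add_one_right_eq_Icc,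
    ← Finset.coe_Icc] at hf
  obtain ⟨σ, hσf, hσ⟩ := hf.exists_perm_eqOn
  refine ⟨σ, fun j hj => hσ j (mem_coe.not.mpr hj), ?_⟩
  intro _ hS'
  obtain ⟨S, hS, rfl⟩ := mem_image.mp hS'
  obtain ⟨c, d, hcd⟩ := hfam S hS
  obtain ⟨a, b, hab⟩ := Nat.exists_Icc_eq_Ico c d
  refine ⟨a, b, coe_injective ?_⟩
  rw [coe_image, coe_Icc, hab, ← hcd, (hσf.mono (coe_subset.mpr (h.1 S hS).2)).image_eq]
end
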